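/- Assume f satisfies (ND) and (MF) and f(0) = 0 < f'(0). Let U be a bounded entire solution of u_t = u_xx + f(u) with U_x not identically zero, satisfying (c0) and (ci)–(civ), and suppose that for every t ∈ ℝ one has U(x,t) → 0 and U_x(x,t) → 0 as x → −∞ and as x → +∞. If U(·,t₀) has at least one zero for some t₀ ∈ ℝ, then for every t < t₀ the function U(·,t) has exactly one zero. -/

import Mathlib

open Filter Set Topology

noncomputable section

/-- first spatial derivative `u_x`. -/
def pdx (u : ℝ → ℝ → ℝ) (x t : ℝ) : ℝ := deriv (fun y => u y t) x

/-- second spatial derivative `u_xx`. -/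
def pdxx (u : ℝ → ℝ → ℝ) (x t : ℝ) : ℝ := deriv (fun y => pdx u y t) x

/-- time derivative `u_t`. -/
def pdt (u : ℝ → ℝ → ℝ) (x t : ℝ) : ℝ := deriv (fun s => u x s) t

/-- Condition (ND): at each zero of `f`, `f` is C¹ on a neighborhood and `f'` is nonzero there. -/
def CondND (f : ℝ → ℝ) : Prop :=
  ∀ γ : ℝ, f γ = 0 → (∃ s ∈ nhds γ, ContDiffOn ℝ 1 f s) ∧ deriv f γ ≠ 0

/-- Condition (MF): `f` is globally Lipschitz and `f s = s/2` for `|s|` large. -/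
def CondMF (f : ℝ → ℝ) : Prop :=
  (∃ K : NNReal, LipschitzWith K f) ∧ ∃ κ : ℝ, 0 < κ ∧ ∀ s : ℝ, κ < |s| → f s = s / 2

/-- A bounded classical solution of `u_t = u_xx + f(u)` on `ℝ × [0,∞)` with initial datum `u₀`. -/
def IsBddSolutionHalf (f : ℝ → ℝ) (u : ℝ → ℝ → ℝ) (u₀ : ℝ → ℝ) : Prop :=
  (∃ M, ∀ x t : ℝ, 0 ≤ t → |u x t| ≤ M) ∧
  ContinuousOn (fun p : ℝ × ℝ => u p.1 p.2) {p : ℝ × ℝ | 0 ≤ p.2} ∧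
  (∀ x : ℝ, u x 0 = u₀ x) ∧
  (∀ x t : ℝ, 0 < t → DifferentiableAt ℝ (fun y => u y t) x) ∧
  (∀ x t : ℝ, 0 < t → DifferentiableAt ℝ (fun y => pdx u y t) x) ∧
  (∀ x t : ℝ, 0 < t → DifferentiableAt ℝ (fun s => u x s) t) ∧
  ContinuousOn (fun p : ℝ × ℝ => pdx u p.1 p.2) {p : ℝ × ℝ | 0 < p.2} ∧
  ContinuousOn (fun p : ℝ × ℝ => pdxx u p.1 p.2) {p : ℝ × ℝ | 0 < p.2} ∧
  ContinuousOn (fun p : ℝ × ℝ => pdt u p.1 p.2) {p : ℝ × ℝ | 0 < p.2} ∧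
  (∀ x t : ℝ, 0 < t → pdt u x t = pdxx u x t + f (u x t))

/-- A bounded entire classical solution of `u_t = u_xx + f(u)` on `ℝ × ℝ`. -/
def IsEntireSolution (f : ℝ → ℝ) (U : ℝ → ℝ → ℝ) : Prop :=
  (∃ M, ∀ x t : ℝ, |U x t| ≤ M) ∧
  Continuous (fun p : ℝ × ℝ => U p.1 p.2) ∧
  (∀ x t : ℝ, DifferentiableAt ℝ (fun y => U y t) x) ∧
  (∀ x t : ℝ, DifferentiableAt ℝ (fun y => pdx U y t) x) ∧
  (∀ x t : ℝ, DifferentiableAt ℝ (fun s => U x s) t) ∧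
  Continuous (fun p : ℝ × ℝ => pdx U p.1 p.2) ∧
  Continuous (fun p : ℝ × ℝ => pdxx U p.1 p.2) ∧
  Continuous (fun p : ℝ × ℝ => pdt U p.1 p.2) ∧
  (∀ x t : ℝ, pdt U x t = pdxx U x t + f (U x t))

/-- Condition (NC): at some positive time the solution has finitely many critical points. -/
def CondNC (u : ℝ → ℝ → ℝ) : Prop :=
  ∃ t : ℝ, 0 < t ∧ {x : ℝ | pdx u x t = 0}.Finite

/-- A steady state: a bounded C² function with `φ'' + f(φ) = 0` on `ℝ`. -/
def IsSteadyState (f : ℝ → ℝ) (φ : ℝ → ℝ) : Prop :=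
  ContDiff ℝ 2 φ ∧ (∃ M, ∀ x, |φ x| ≤ M) ∧ ∀ x, deriv (deriv φ) x + f (φ x) = 0

/-- The spatial trajectory `τ(φ) = {(φ(x), φ'(x)) : x ∈ ℝ}`. -/
def traj (φ : ℝ → ℝ) : Set (ℝ × ℝ) := Set.range fun x => (φ x, deriv φ x)

/-- A nonconstant periodic solution of the steady state equation. -/
def IsNonconstPeriodicSol (f : ℝ → ℝ) (ψ : ℝ → ℝ) : Prop :=
  IsSteadyState f ψ ∧ (∃ p > 0, Function.Periodic ψ p) ∧ ∃ x y, ψ x ≠ ψ y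

/-- `𝒫₀`: the union of all nonconstant periodic orbits of the planar system. -/
def P0 (f : ℝ → ℝ) : Set (ℝ × ℝ) :=
  {p | ∃ ψ, IsNonconstPeriodicSol f ψ ∧ p ∈ traj ψ}

/-- The ω-limit set (with locally uniform convergence); for sequences `tₙ → -∞`
replace `atTop` by `atBot` in the first condition. -/
def omegaSet (u : ℝ → ℝ → ℝ) : Set (ℝ → ℝ) :=
  {φ | ∃ tn : ℕ → ℝ, Tendsto tn atTop atTop ∧
    TendstoLocallyUniformly (fun n x => u x (tn n)) φ atTop}

/-- Conditions (ci)–(civ) on an entire solution `U`. -/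
def SideConds (U : ℝ → ℝ → ℝ) : Prop :=
  (∃ m : ℕ, ∀ t : ℝ,
      {x : ℝ | U x t = 0}.Finite ∧ {x : ℝ | U x t = 0}.ncard ≤ m ∧
      {x : ℝ | pdx U x t = 0}.Finite ∧ {x : ℝ | pdx U x t = 0}.ncard ≤ m) ∧
  (∀ x t : ℝ, (U x t = 0 → pdx U x t ≠ 0) ∧ (pdx U x t = 0 → pdxx U x t ≠ 0)) ∧
  (∀ t : ℝ, (∃ L, Tendsto (fun x => U x t) atBot (nhds L)) ∧
            (∃ L, Tendsto (fun x => U x t) atTop (nhds L))) ∧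
  (∀ t : ℝ, Function.Injective fun x => (U x t, pdx U x t)) ∧
  (∀ t x : ℝ, (IsLocalMin (fun y => U y t) x → U x t ≤ 0) ∧
              (IsLocalMax (fun y => U y t) x → 0 ≤ U x t))

/-- `Λ_out`, the outer loop associated with `Π₀`. -/
def outerLoop (Pi0 : Set (ℝ × ℝ)) : Set (ℝ × ℝ) :=
  closure Pi0 \ (Pi0 ∪ {((0 : ℝ), (0 : ℝ))})

/-- `Λ` is a heteroclinic loop with limiting equilibria `γm < 0 < γp` and standing waves
`Φp` (increasing) and `Φm` (decreasing). -/
def IsHeteroclinicLoop (f : ℝ → ℝ) (Λ : Set (ℝ × ℝ)) (γm γp : ℝ) (Φp Φm : ℝ → ℝ) : Prop :=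
  γm < 0 ∧ 0 < γp ∧ f γm = 0 ∧ f γp = 0 ∧
  IsSteadyState f Φp ∧ StrictMono Φp ∧
  Tendsto Φp atBot (nhds γm) ∧ Tendsto Φp atTop (nhds γp) ∧
  IsSteadyState f Φm ∧ StrictAnti Φm ∧
  Tendsto Φm atBot (nhds γp) ∧ Tendsto Φm atTop (nhds γm) ∧
  Λ = insert ((γm : ℝ), (0 : ℝ)) (insert ((γp : ℝ), (0 : ℝ)) (traj Φp ∪ traj Φm))

/-- `Λ` is a homoclinic loop with equilibrium `γ` and ground state `Φ` (normalized by `Φ'(0) = 0`). -/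
def IsHomoclinicLoop (f : ℝ → ℝ) (Λ : Set (ℝ × ℝ)) (γ : ℝ) (Φ : ℝ → ℝ) : Prop :=
  f γ = 0 ∧ IsSteadyState f Φ ∧ (∃ x y, Φ x ≠ Φ y) ∧
  Tendsto (fun x => (Φ x, deriv Φ x)) atBot (nhds ((γ : ℝ), (0 : ℝ))) ∧
  Tendsto (fun x => (Φ x, deriv Φ x)) atTop (nhds ((γ : ℝ), (0 : ℝ))) ∧
  deriv Φ 0 = 0 ∧
  Λ = insert ((γ : ℝ), (0 : ℝ)) (traj Φ)


/-!
Fix a time `t` and write `φ = U(·,t)`. By (ci)–(civ) and the decay of `(U, U_x)` at `±∞`, the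
phase curve `x ↦ (φ x, φ' x)` is a simple curve leaving `(0, 0)` and returning to it, made of
humps separated by simple zeros, and each hump has a single crest (two crests would enclose a
positive minimum). Two rising arcs of a simple curve cannot cross, so of two disjoint humps of the
same sign the one entering slower also leaves slower. Since the first hump enters at speed `0`,
the speeds `|φ'|` at the zeros increase along every other hump, which is incompatible with the
last hump leaving at speed `0` once there are two zeros. Hence `U(·,t)` has at most one zero.

A zero at `t₀` is simple, so `U(·,t₀)` takes both signs. If `U(·,t)` had no zero it would have a
strict sign, and the comparison principle, proved with the barrier
`ε (1 + (x - x₁)²) e^{(K + 3)(s - t)}` for `K` a Lipschitz constant of `f`, would carry that sign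
to time `t₀`.
-/
open Pointwise

section Calculus

variable {φ ψ : ℝ → ℝ} {a d : ℝ}

lemma HasDerivAt.eventually_nhdsGT_pos (hd : HasDerivAt φ d a) (ha : φ a = 0) (hd0 : 0 < d) :
    ∀ᶠ x in 𝓝[>] a, 0 < φ x := by
  filter_upwards [nhdsGT_le_nhdsNE a <| (hasDerivAt_iff_tendsto_slope.1 hd).eventually
    (eventually_gt_nhds hd0), self_mem_nhdsWithin] with x hx hax
  exact pos_of_slope_pos hax hx ha

lemma HasDerivAt.eventually_nhdsLT_neg (hd : HasDerivAt φ d a) (ha : φ a = 0) (hd0 : 0 < d) :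
    ∀ᶠ x in 𝓝[<] a, φ x < 0 := by
  filter_upwards [nhdsLT_le_nhdsNE a <| (hasDerivAt_iff_tendsto_slope.1 hd).eventually
    (eventually_gt_nhds hd0), self_mem_nhdsWithin] with x hx hxa
  exact neg_of_slope_pos hxa hx ha

lemma HasDerivAt.eventually_nhdsGT_neg (hd : HasDerivAt φ d a) (ha : φ a = 0) (hd0 : d < 0) :
    ∀ᶠ x in 𝓝[>] a, φ x < 0 := by
  simpa using hd.neg.eventually_nhdsGT_pos (by simp [ha]) (neg_pos.2 hd0)

lemma HasDerivAt.eventually_nhdsLT_pos (hd : HasDerivAt φ d a) (ha : φ a = 0) (hd0 : d < 0) :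
    ∀ᶠ x in 𝓝[<] a, 0 < φ x := by
  simpa using hd.neg.eventually_nhdsLT_neg (by simp [ha]) (neg_pos.2 hd0)

lemma HasDerivAt.exists_neg_and_exists_pos (hd : HasDerivAt φ d a) (ha : φ a = 0) (hd0 : d ≠ 0) :
    (∃ x, φ x < 0) ∧ ∃ x, 0 < φ x := by
  rcases hd0.lt_or_gt with h | h
  · exact ⟨(hd.eventually_nhdsGT_neg ha h).exists, (hd.eventually_nhdsLT_pos ha h).exists⟩
  · exact ⟨(hd.eventually_nhdsLT_neg ha h).exists, (hd.eventually_nhdsGT_pos ha h).exists⟩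

lemma strictMonoOn_of_hasDerivAt_pos {S : Set ℝ} (hS : Convex ℝ S)
    (hd : ∀ x, HasDerivAt φ (ψ x) x) (hψ : ∀ x ∈ interior S, 0 < ψ x) : StrictMonoOn φ S :=
  strictMonoOn_of_hasDerivWithinAt_pos hS
    (continuous_iff_continuousAt.2 fun x => (hd x).continuousAt).continuousOn
    (fun x _ => (hd x).hasDerivWithinAt) hψ

lemma strictAntiOn_of_hasDerivAt_neg {S : Set ℝ} (hS : Convex ℝ S)
    (hd : ∀ x, HasDerivAt φ (ψ x) x) (hψ : ∀ x ∈ interior S, ψ x < 0) : StrictAntiOn φ S :=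
  strictAntiOn_of_hasDerivWithinAt_neg hS
    (continuous_iff_continuousAt.2 fun x => (hd x).continuousAt).continuousOn
    (fun x _ => (hd x).hasDerivWithinAt) hψ

lemma eventually_nhdsGT_lt_of_deriv_neg (hd : ∀ x, HasDerivAt φ (ψ x) x)
    (h : ∀ᶠ x in 𝓝[>] a, ψ x < 0) : ∀ᶠ x in 𝓝[>] a, φ x < φ a := by
  obtain ⟨u, hu, hsub⟩ := mem_nhdsGT_iff_exists_Ioo_subset.1 h
  filter_upwards [Ioo_mem_nhdsGT hu] with x hx
  refine strictAntiOn_of_hasDerivAt_neg (convex_Icc a x) hd (fun y hy => hsub ?_)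
    (left_mem_Icc.2 hx.1.le) (right_mem_Icc.2 hx.1.le) hx.1
  rw [interior_Icc] at hy
  exact ⟨hy.1, hy.2.trans hx.2⟩

lemma eventually_nhdsLT_lt_of_deriv_pos (hd : ∀ x, HasDerivAt φ (ψ x) x)
    (h : ∀ᶠ x in 𝓝[<] a, 0 < ψ x) : ∀ᶠ x in 𝓝[<] a, φ x < φ a := by
  obtain ⟨l, hl, hsub⟩ := mem_nhdsLT_iff_exists_Ioo_subset.1 h
  filter_upwards [Ioo_mem_nhdsLT hl] with x hx
  refine strictMonoOn_of_hasDerivAt_pos (convex_Icc x a) hd (fun y hy => hsub ?_)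
    (left_mem_Icc.2 hx.2.le) (right_mem_Icc.2 hx.2.le) hx.2
  rw [interior_Icc] at hy
  exact ⟨hx.1.trans hy.1, hy.2⟩

end Calculus

section Sign

variable {X : Type*} [TopologicalSpace X] {s : Set X} {φ : X → ℝ} {a : X}

lemma IsPreconnected.pos_of_ne_zero (hs : IsPreconnected s) (hφ : ContinuousOn φ s)
    (h0 : ∀ x ∈ s, φ x ≠ 0) (ha : a ∈ s) (hpos : 0 < φ a) : ∀ x ∈ s, 0 < φ x := by
  intro x hx
  by_contra! hneg
  obtain ⟨y, hy, hy0⟩ := hs.intermediate_value hx ha hφ ⟨hneg, hpos.le⟩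
  exact h0 y hy hy0

lemma IsPreconnected.neg_of_ne_zero (hs : IsPreconnected s) (hφ : ContinuousOn φ s)
    (h0 : ∀ x ∈ s, φ x ≠ 0) (ha : a ∈ s) (hneg : φ a < 0) : ∀ x ∈ s, φ x < 0 := by
  simpa using hs.pos_of_ne_zero (φ := fun x => -φ x) hφ.neg (by simpa using h0) ha
    (neg_pos.2 hneg)

end Sign

lemma Set.OrdConnected.neg {α : Type*} [AddCommGroup α] [PartialOrder α] [IsOrderedAddMonoid α]
    {s : Set α} (hs : s.OrdConnected) : (-s).OrdConnected :=
  ⟨fun _ hx _ hy _ hz => hs.out hy hx ⟨neg_le_neg hz.2, neg_le_neg hz.1⟩⟩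

lemma isOpen_setOf_exists_eq_lt {φ g h : ℝ → ℝ} {S : Set ℝ} (hφ : Continuous φ)
    (hg : Continuous g) (hh : Continuous h) (hS : IsOpen S) (hmono : StrictMonoOn φ S) :
    IsOpen {y | ∃ x ∈ S, φ x = φ y ∧ g x < h y} := by
  rw [isOpen_iff_mem_nhds]
  rintro y₀ ⟨x₀, hx₀, hxy₀, hlt⟩
  obtain ⟨m, hgm, hmh⟩ := exists_between hlt
  obtain ⟨l, u, ⟨hl, hu⟩, hsub⟩ := mem_nhds_iff_exists_Ioo_subset.1
    (inter_mem (hS.mem_nhds hx₀) (hg.continuousAt.eventually (gt_mem_nhds hgm)))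
  have hl' : (l + x₀) / 2 ∈ Ioo l u := ⟨by linarith, by linarith⟩
  have hu' : (x₀ + u) / 2 ∈ Ioo l u := ⟨by linarith, by linarith⟩
  have hφl : φ ((l + x₀) / 2) < φ y₀ := hxy₀ ▸ hmono (hsub hl').1 hx₀ (by linarith)
  have hφu : φ y₀ < φ ((x₀ + u) / 2) := hxy₀ ▸ hmono hx₀ (hsub hu').1 (by linarith)
  filter_upwards [hφ.continuousAt.eventually (isOpen_Ioo.mem_nhds ⟨hφl, hφu⟩),
    hh.continuousAt.eventually (lt_mem_nhds hmh)] with y hy hmy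
  obtain ⟨x, hx, hxy⟩ := intermediate_value_Ioo (by linarith) hφ.continuousOn hy
  have hxS : x ∈ S ∩ {x | g x < m} := hsub ⟨by linarith [hx.1], by linarith [hx.2]⟩
  exact ⟨x, hxS.1, hxy, hxS.2.trans hmy⟩

structure IsSimplePhaseCurve (φ ψ : ℝ → ℝ) : Prop where
  hasDerivAt : ∀ x, HasDerivAt φ (ψ x) x
  continuous_deriv : Continuous ψ
  injective : Function.Injective fun x => (φ x, ψ x)

section PhaseCurve

variable {φ ψ : ℝ → ℝ}

lemma IsSimplePhaseCurve.continuous (C : IsSimplePhaseCurve φ ψ) : Continuous φ :=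
  continuous_iff_continuousAt.2 fun x => (C.hasDerivAt x).continuousAt

lemma IsSimplePhaseCurve.reflect (C : IsSimplePhaseCurve φ ψ) :
    IsSimplePhaseCurve (fun x => φ (-x)) (fun x => -ψ (-x)) where
  hasDerivAt x := by
    simpa [Function.comp_def] using (C.hasDerivAt (-x)).comp x (hasDerivAt_neg x)
  continuous_deriv := (C.continuous_deriv.comp continuous_neg).neg
  injective x y h := by
    simp only [Prod.mk.injEq, neg_inj] at h
    exact neg_injective (C.injective (Prod.ext h.1 h.2))

def ArcEntry (φ ψ : ℝ → ℝ) (S : Set ℝ) (w : ℝ) : Prop :=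
  ∀ ε > 0, ∃ x₁ ∈ S, ∀ x ∈ S, x ≤ x₁ → φ x < ε ∧ dist (ψ x) w < ε

/-- The phase curve over the interval `S = (a, b)` (with `a = -∞` allowed) is a rising arc in the
open first quadrant, from `(0, w)` (reached only in the limit `x → a`) to `(φ b, 0)`. -/
structure IsRisingArc (φ ψ : ℝ → ℝ) (S : Set ℝ) (b w : ℝ) : Prop where
  isOpen : IsOpen S
  subset_Iio : S ⊆ Iio b
  Ioo_subset : ∀ x ∈ S, Ioo x b ⊆ S
  pos : ∀ x ∈ S, 0 < φ x
  deriv_pos : ∀ x ∈ S, 0 < ψ x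
  deriv_end : ψ b = 0
  entry : ArcEntry φ ψ S w

namespace IsRisingArc

variable {S : Set ℝ} {b w : ℝ}

lemma ordConnected (A : IsRisingArc φ ψ S b w) : S.OrdConnected :=
  ⟨fun x hx _ hy _ hz => hz.1.eq_or_lt.elim (fun h => h ▸ hx)
    fun h => A.Ioo_subset x hx ⟨h, hz.2.trans_lt (A.subset_Iio hy)⟩⟩

lemma strictMonoOn (A : IsRisingArc φ ψ S b w) (hd : ∀ x, HasDerivAt φ (ψ x) x) :
    StrictMonoOn φ S :=
  strictMonoOn_of_hasDerivAt_pos A.ordConnected.convex hd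
    fun x hx => A.deriv_pos x (interior_subset hx)

lemma lt_end (A : IsRisingArc φ ψ S b w) (hd : ∀ x, HasDerivAt φ (ψ x) x) {x : ℝ}
    (hx : x ∈ S) : φ x < φ b := by
  have hxb : x < b := A.subset_Iio hx
  refine strictMonoOn_of_hasDerivAt_pos (convex_Icc x b) hd (fun y hy => A.deriv_pos y ?_)
    (left_mem_Icc.2 hxb.le) (right_mem_Icc.2 hxb.le) hxb
  rw [interior_Icc] at hy
  exact A.Ioo_subset x hx hy

lemma end_pos (A : IsRisingArc φ ψ S b w) (hd : ∀ x, HasDerivAt φ (ψ x) x) : 0 < φ b := by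
  obtain ⟨x, hx, -⟩ := A.entry 1 one_pos
  exact (A.pos x hx).trans (A.lt_end hd hx)

lemma surjOn (A : IsRisingArc φ ψ S b w) (hd : ∀ x, HasDerivAt φ (ψ x) x) :
    SurjOn φ S (Ioo 0 (φ b)) := by
  intro u hu
  obtain ⟨x₁, hx₁, h⟩ := A.entry u hu.1
  obtain ⟨x, hx, rfl⟩ := intermediate_value_Ioo (A.subset_Iio hx₁).le
    (continuous_iff_continuousAt.2 fun x => (hd x).continuousAt).continuousOn
    ⟨(h x₁ hx₁ le_rfl).1, hu.2⟩
  exact ⟨x, A.Ioo_subset x₁ hx₁ hx, rfl⟩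

end IsRisingArc

/-- Otherwise the points of `S₂` at which the second arc lies above, resp. below, the first arc
at the same height form two disjoint nonempty open sets covering `S₂`. -/
theorem IsSimplePhaseCurve.apex_lt (C : IsSimplePhaseCurve φ ψ) {S₁ S₂ : Set ℝ}
    {b₁ b₂ w₁ w₂ : ℝ} (A₁ : IsRisingArc φ ψ S₁ b₁ w₁) (A₂ : IsRisingArc φ ψ S₂ b₂ w₂)
    (hS : Disjoint S₁ S₂) (hb : b₁ ≠ b₂) (hw : w₁ < w₂) : φ b₁ < φ b₂ := by
  have hd := C.hasDerivAt
  have hmono := A₁.strictMonoOn hd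
  by_contra! hle
  have hlt : φ b₂ < φ b₁ := hle.lt_of_ne fun h =>
    hb (C.injective (Prod.ext h.symm (A₁.deriv_end.trans A₂.deriv_end.symm)))
  have hsurj : ∀ y ∈ S₂, ∃ x ∈ S₁, φ x = φ y := fun y hy =>
    A₁.surjOn hd ⟨A₂.pos y hy, (A₂.lt_end hd hy).trans hlt⟩
  set Up := {y | ∃ x ∈ S₁, φ x = φ y ∧ ψ x < ψ y}
  set Dn := {y | ∃ x ∈ S₁, φ x = φ y ∧ -ψ x < -ψ y}
  have hUp : IsOpen Up := isOpen_setOf_exists_eq_lt C.continuous C.continuous_deriv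
    C.continuous_deriv A₁.isOpen hmono
  have hDn : IsOpen Dn := isOpen_setOf_exists_eq_lt C.continuous C.continuous_deriv.neg
    C.continuous_deriv.neg A₁.isOpen hmono
  have hcover : S₂ ⊆ Up ∪ Dn := by
    intro y hy
    obtain ⟨x, hx, hxy⟩ := hsurj y hy
    rcases lt_trichotomy (ψ x) (ψ y) with h | h | h
    · exact Or.inl ⟨x, hx, hxy, h⟩
    · exact absurd (C.injective (Prod.ext hxy h) ▸ hx) (hS.notMem_of_mem_right hy)
    · exact Or.inr ⟨x, hx, hxy, neg_lt_neg h⟩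
  have hUpS₂ : (S₂ ∩ Up).Nonempty := by
    obtain ⟨ε, hε, hεw⟩ : ∃ ε > 0, w₁ + ε < w₂ - ε := ⟨(w₂ - w₁) / 3, by linarith, by linarith⟩
    obtain ⟨x₁, hx₁, h₁⟩ := A₁.entry ε hε
    obtain ⟨y, hy, h₂⟩ := A₂.entry (min ε (φ x₁)) (lt_min hε (A₁.pos x₁ hx₁))
    obtain ⟨hφy, hψy⟩ := h₂ y hy le_rfl
    obtain ⟨x, hx, hxy⟩ := hsurj y hy
    have hxx₁ : x ≤ x₁ :=
      (hmono.le_iff_le hx hx₁).1 (hxy ▸ (hφy.trans_le (min_le_right _ _)).le)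
    have hψx := (h₁ x hx hxx₁).2
    rw [Real.dist_eq, abs_lt] at hψx hψy
    exact ⟨y, hy, x, hx, hxy, by linarith [min_le_left ε (φ x₁)]⟩
  have hDnS₂ : (S₂ ∩ Dn).Nonempty := by
    obtain ⟨x, hx, hxb⟩ := A₁.surjOn hd ⟨A₂.end_pos hd, hlt⟩
    have hb₂ : b₂ ∈ Dn := ⟨x, hx, hxb, by simpa [A₂.deriv_end] using A₁.deriv_pos x hx⟩
    obtain ⟨y₀, hy₀, -⟩ := A₂.entry 1 one_pos
    obtain ⟨y, hy, hyDn⟩ := Filter.nonempty_of_mem (inter_mem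
      (Ioo_mem_nhdsLT (A₂.subset_Iio hy₀)) (mem_nhdsWithin_of_mem_nhds (hDn.mem_nhds hb₂)))
    exact ⟨y, A₂.Ioo_subset y₀ hy₀ hy, hyDn⟩
  obtain ⟨y, -, ⟨x, hx, hxy, hup⟩, ⟨x', hx', hxy', hdn⟩⟩ :=
    A₂.ordConnected.isPreconnected Up Dn hUp hDn hcover hUpS₂ hDnS₂
  obtain rfl := hmono.injOn hx hx' (hxy.trans hxy'.symm)
  linarith

end PhaseCurve

/-- Conditions (ci)–(civ), apart from the zero count, and the decay at `±∞`, for `φ = U(·,t)`,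
`ψ = U_x(·,t)`, `χ = U_xx(·,t)`. -/
structure IsAdmissibleProfile (φ ψ χ : ℝ → ℝ) : Prop extends IsSimplePhaseCurve φ ψ where
  hasDerivAt_deriv : ∀ x, HasDerivAt ψ (χ x) x
  deriv_ne_zero : ∀ x, φ x = 0 → ψ x ≠ 0
  deriv2_ne_zero : ∀ x, ψ x = 0 → χ x ≠ 0
  tendsto_atBot : Tendsto φ atBot (𝓝 0)
  tendsto_atTop : Tendsto φ atTop (𝓝 0)
  tendsto_deriv_atBot : Tendsto ψ atBot (𝓝 0)
  tendsto_deriv_atTop : Tendsto ψ atTop (𝓝 0)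
  nonpos_of_isLocalMin : ∀ x, IsLocalMin φ x → φ x ≤ 0
  nonneg_of_isLocalMax : ∀ x, IsLocalMax φ x → 0 ≤ φ x

namespace IsAdmissibleProfile

variable {φ ψ χ : ℝ → ℝ} {s : Set ℝ} {a b c w w' : ℝ}

lemma neg (N : IsAdmissibleProfile φ ψ χ) :
    IsAdmissibleProfile (fun x => -φ x) (fun x => -ψ x) (fun x => -χ x) where
  hasDerivAt x := (N.hasDerivAt x).neg
  continuous_deriv := N.continuous_deriv.neg
  injective x y h := N.injective (by simpa using h)
  hasDerivAt_deriv x := (N.hasDerivAt_deriv x).neg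
  deriv_ne_zero x h := by simpa using N.deriv_ne_zero x (by simpa using h)
  deriv2_ne_zero x h := by simpa using N.deriv2_ne_zero x (by simpa using h)
  tendsto_atBot := by simpa using N.tendsto_atBot.neg
  tendsto_atTop := by simpa using N.tendsto_atTop.neg
  tendsto_deriv_atBot := by simpa using N.tendsto_deriv_atBot.neg
  tendsto_deriv_atTop := by simpa using N.tendsto_deriv_atTop.neg
  nonpos_of_isLocalMin x h := by simpa using N.nonneg_of_isLocalMax x (by simpa using h.neg)
  nonneg_of_isLocalMax x h := by simpa using N.nonpos_of_isLocalMin x (by simpa using h.neg)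

lemma reflect (N : IsAdmissibleProfile φ ψ χ) :
    IsAdmissibleProfile (fun x => φ (-x)) (fun x => -ψ (-x)) (fun x => χ (-x)) where
  toIsSimplePhaseCurve := N.toIsSimplePhaseCurve.reflect
  hasDerivAt_deriv x := by
    simpa [Function.comp_def] using ((N.hasDerivAt_deriv (-x)).comp x (hasDerivAt_neg x)).fun_neg
  deriv_ne_zero x h := by simpa using N.deriv_ne_zero (-x) h
  deriv2_ne_zero x h := N.deriv2_ne_zero (-x) (by simpa using h)
  tendsto_atBot := N.tendsto_atTop.comp tendsto_neg_atBot_atTop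
  tendsto_atTop := N.tendsto_atBot.comp tendsto_neg_atTop_atBot
  tendsto_deriv_atBot := by simpa using (N.tendsto_deriv_atTop.comp tendsto_neg_atBot_atTop).neg
  tendsto_deriv_atTop := by simpa using (N.tendsto_deriv_atBot.comp tendsto_neg_atTop_atBot).neg
  nonpos_of_isLocalMin x h := N.nonpos_of_isLocalMin (-x) <| by
    simpa [Function.comp_def] using
      (show IsLocalMin (fun y => φ (-y)) (-(-x)) by rwa [neg_neg]).comp_continuous
        continuous_neg.continuousAt
  nonneg_of_isLocalMax x h := N.nonneg_of_isLocalMax (-x) <| by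
    simpa [Function.comp_def] using
      (show IsLocalMax (fun y => φ (-y)) (-(-x)) by rwa [neg_neg]).comp_continuous
        continuous_neg.continuousAt

lemma deriv2_neg (N : IsAdmissibleProfile φ ψ χ) (hc : ψ c = 0) (hpos : 0 < φ c) : χ c < 0 := by
  refine (N.deriv2_ne_zero c hc).lt_or_gt.resolve_right fun h =>
    (N.nonpos_of_isLocalMin c ?_).not_gt hpos
  have hderiv : deriv φ = ψ := funext fun x => (N.hasDerivAt x).deriv
  exact isLocalMin_of_deriv_deriv_pos (by rwa [hderiv, (N.hasDerivAt_deriv c).deriv])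
    (by rwa [hderiv]) N.continuous.continuousAt

/-- Two critical points in a positive region would enclose a positive interior minimum. -/
lemma eq_of_deriv_eq_zero (N : IsAdmissibleProfile φ ψ χ) (hs : s.OrdConnected)
    (hpos : ∀ x ∈ s, 0 < φ x) {c c' : ℝ} (hc : c ∈ s) (hc' : c' ∈ s) (hψc : ψ c = 0)
    (hψc' : ψ c' = 0) : c = c' := by
  wlog hlt : c < c' generalizing c c'
  · rcases (not_lt.1 hlt).eq_or_lt with h | h
    · exact h.symm
    · exact (this hc' hc hψc' hψc h).symm
  obtain ⟨m, hm, hmin⟩ := isCompact_Icc.exists_isMinOn (nonempty_Icc.2 hlt.le)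
    N.continuous.continuousOn
  rw [isMinOn_iff] at hmin
  have hright : ∀ᶠ y in 𝓝[>] c, φ y < φ c := eventually_nhdsGT_lt_of_deriv_neg N.hasDerivAt
    ((N.hasDerivAt_deriv c).eventually_nhdsGT_neg hψc (N.deriv2_neg hψc (hpos c hc)))
  have hleft : ∀ᶠ y in 𝓝[<] c', φ y < φ c' := eventually_nhdsLT_lt_of_deriv_pos N.hasDerivAt
    ((N.hasDerivAt_deriv c').eventually_nhdsLT_pos hψc' (N.deriv2_neg hψc' (hpos c' hc')))
  have hmc : m ≠ c := by
    rintro rfl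
    obtain ⟨y, hy, hyI⟩ := (hright.and (Icc_mem_nhdsGT hlt)).exists
    exact (hmin y hyI).not_gt hy
  have hmc' : m ≠ c' := by
    rintro rfl
    obtain ⟨y, hy, hyI⟩ := (hleft.and (Icc_mem_nhdsLT hlt)).exists
    exact (hmin y hyI).not_gt hy
  have hmin_loc : IsLocalMin φ m := Filter.mem_of_superset
    (Icc_mem_nhds (hm.1.lt_of_ne hmc.symm) (hm.2.lt_of_ne hmc')) hmin
  exact ((N.nonpos_of_isLocalMin m hmin_loc).not_gt (hpos m (hs.out hc hc' hm))).elim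

lemma deriv_pos_of_lt (N : IsAdmissibleProfile φ ψ χ) (hs : s.OrdConnected)
    (hpos : ∀ x ∈ s, 0 < φ x) (hc : c ∈ s) (hψc : ψ c = 0) {x : ℝ} (hx : x ∈ s) (hxc : x < c) :
    0 < ψ x := by
  have hne : ∀ y ∈ Ico x c, ψ y ≠ 0 := fun y hy h0 =>
    hy.2.ne (N.eq_of_deriv_eq_zero hs hpos (hs.out hx hc ⟨hy.1, hy.2.le⟩) hc h0 hψc)
  obtain ⟨y, hy, hyI⟩ := (((N.hasDerivAt_deriv c).eventually_nhdsLT_pos hψc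
    (N.deriv2_neg hψc (hpos c hc))).and (Ico_mem_nhdsLT hxc)).exists
  exact isPreconnected_Ico.pos_of_ne_zero N.continuous_deriv.continuousOn hne hyI hy x
    (left_mem_Ico.2 hxc)

lemma deriv_pos_of_pos_right (N : IsAdmissibleProfile φ ψ χ) (ha : φ a = 0) (hs : s ∈ 𝓝[>] a)
    (hpos : ∀ x ∈ s, 0 < φ x) : 0 < ψ a := by
  refine (N.deriv_ne_zero a ha).lt_or_gt.resolve_left fun h => ?_
  obtain ⟨x, hx, hxs⟩ := (((N.hasDerivAt a).eventually_nhdsGT_neg ha h).and hs).exists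
  exact (hpos x hxs).not_gt hx

lemma deriv_neg_of_pos_left (N : IsAdmissibleProfile φ ψ χ) (hb : φ b = 0) (hs : s ∈ 𝓝[<] b)
    (hpos : ∀ x ∈ s, 0 < φ x) : ψ b < 0 := by
  refine (N.deriv_ne_zero b hb).lt_or_gt.resolve_right fun h => ?_
  obtain ⟨x, hx, hxs⟩ := (((N.hasDerivAt b).eventually_nhdsLT_neg hb h).and hs).exists
  exact (hpos x hxs).not_gt hx

lemma neg_of_pos_left (N : IsAdmissibleProfile φ ψ χ) (hb : φ b = 0) (hs : s ∈ 𝓝[<] b)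
    (hpos : ∀ x ∈ s, 0 < φ x) {t : Set ℝ} (ht : t ∈ 𝓝[>] b) (htc : IsPreconnected t)
    (hne : ∀ x ∈ t, φ x ≠ 0) : ∀ x ∈ t, φ x < 0 := by
  obtain ⟨x, hx, hxt⟩ := (((N.hasDerivAt b).eventually_nhdsGT_neg hb
    (N.deriv_neg_of_pos_left hb hs hpos)).and ht).exists
  exact htc.neg_of_ne_zero N.continuous.continuousOn hne hxt hx

lemma isRisingArc (N : IsAdmissibleProfile φ ψ χ) (hs : IsOpen s) (hso : s.OrdConnected)
    (hpos : ∀ x ∈ s, 0 < φ x) (hc : c ∈ s) (hψc : ψ c = 0)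
    (hentry : ArcEntry φ ψ (s ∩ Iio c) w) : IsRisingArc φ ψ (s ∩ Iio c) c w where
  isOpen := hs.inter isOpen_Iio
  subset_Iio := inter_subset_right
  Ioo_subset _ hx _ hy := ⟨hso.out hx.1 hc ⟨hy.1.le, hy.2.le⟩, hy.2⟩
  pos _ hx := hpos _ hx.1
  deriv_pos _ hx := N.deriv_pos_of_lt hso hpos hc hψc hx.1 hx.2
  deriv_end := hψc
  entry := hentry

end IsAdmissibleProfile

section Hump

variable {φ ψ χ : ℝ → ℝ} {s : Set ℝ} {a b c w w' : ℝ}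

lemma arcEntry_Ioo (hφ : ContinuousAt φ a) (hψ : ContinuousAt ψ a) (ha : φ a = 0) (hac : a < c) :
    ArcEntry φ ψ (Ioo a c) (ψ a) := by
  intro ε hε
  obtain ⟨l, u, ⟨hl, hu⟩, hsub⟩ := mem_nhds_iff_exists_Ioo_subset.1
    ((hφ.eventually (gt_mem_nhds (ha ▸ hε))).and (hψ.eventually (Metric.ball_mem_nhds _ hε)))
  refine ⟨(a + min u c) / 2, ⟨?_, ?_⟩, fun x hx hx₁ => hsub ⟨hl.trans hx.1, ?_⟩⟩ <;>
    linarith [lt_min hu hac, min_le_left u c, min_le_right u c]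

lemma arcEntry_Iio (hφ : Tendsto φ atBot (𝓝 0)) (hψ : Tendsto ψ atBot (𝓝 w)) :
    ArcEntry φ ψ (Iio c) w := by
  intro ε hε
  obtain ⟨X, hX⟩ := eventually_atBot.1
    ((hφ.eventually (gt_mem_nhds hε)).and (hψ.eventually (Metric.ball_mem_nhds w hε)))
  exact ⟨min X (c - 1), by simp, fun x _ hx => hX x (hx.trans (min_le_left _ _))⟩

/-- A hump of the phase curve over `s` with crest at `c`, entering at speed `w` and leaving at
speed `w'`; its falling half is read backwards, through `x ↦ -x`, as a second rising arc. -/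
structure IsHump (φ ψ : ℝ → ℝ) (s : Set ℝ) (c w w' : ℝ) : Prop where
  mem : c ∈ s
  rising : IsRisingArc φ ψ (s ∩ Iio c) c w
  falling : IsRisingArc (fun x => φ (-x)) (fun x => -ψ (-x)) (-s ∩ Iio (-c)) (-c) w'

lemma IsAdmissibleProfile.isHump (N : IsAdmissibleProfile φ ψ χ) (hs : IsOpen s)
    (hso : s.OrdConnected) (hpos : ∀ x ∈ s, 0 < φ x) (hc : c ∈ s) (hψc : ψ c = 0)
    (hin : ArcEntry φ ψ (s ∩ Iio c) w)
    (hout : ArcEntry (fun x => φ (-x)) (fun x => -ψ (-x)) (-s ∩ Iio (-c)) w') :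
    IsHump φ ψ s c w w' :=
  ⟨hc, N.isRisingArc hs hso hpos hc hψc hin,
    N.reflect.isRisingArc hs.neg hso.neg (fun _ hx => hpos _ hx) (neg_mem_neg.2 hc)
      (by simpa using hψc) hout⟩

lemma IsHump.reflect (H : IsHump (fun x => φ (-x)) (fun x => -ψ (-x)) s c w w') :
    IsHump φ ψ (-s) (-c) w' w :=
  ⟨neg_mem_neg.2 H.mem, by simpa only [neg_neg] using H.falling,
    by simpa only [neg_neg] using H.rising⟩

/-- The first crest is lower, and then the falling halves cannot cross either. -/
lemma IsHump.exit_le (C : IsSimplePhaseCurve φ ψ) {s₁ s₂ : Set ℝ} {c₁ c₂ w₁ w₂ w₁' w₂' : ℝ}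
    (H₁ : IsHump φ ψ s₁ c₁ w₁ w₁') (H₂ : IsHump φ ψ s₂ c₂ w₂ w₂') (hs : Disjoint s₁ s₂)
    (hw : w₁ < w₂) : w₁' ≤ w₂' := by
  have hc : c₁ ≠ c₂ := hs.ne_of_mem H₁.mem H₂.mem
  have hcrest := C.apex_lt H₁.rising H₂.rising
    (hs.mono inter_subset_left inter_subset_left) hc hw
  by_contra! hw'
  have hcrest' := C.reflect.apex_lt H₂.falling H₁.falling
    (disjoint_left.2 fun _ hx₂ hx₁ => disjoint_left.1 hs hx₁.1 hx₂.1) (neg_injective.ne hc.symm) hw'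
  simp only [neg_neg] at hcrest'
  exact hcrest.not_gt hcrest'

lemma IsAdmissibleProfile.exists_hump_Ioo (N : IsAdmissibleProfile φ ψ χ) (hab : a < b)
    (ha : φ a = 0) (hb : φ b = 0) (hpos : ∀ x ∈ Ioo a b, 0 < φ x) :
    ∃ c, IsHump φ ψ (Ioo a b) c |ψ a| |ψ b| := by
  obtain ⟨c, hc, hψc⟩ := exists_hasDerivAt_eq_zero hab N.continuous.continuousOn
    (ha.trans hb.symm) fun x _ => N.hasDerivAt x
  rw [abs_of_pos (N.deriv_pos_of_pos_right ha (Ioo_mem_nhdsGT hab) hpos),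
    abs_of_neg (N.deriv_neg_of_pos_left hb (Ioo_mem_nhdsLT hab) hpos)]
  refine ⟨c, N.isHump isOpen_Ioo ordConnected_Ioo hpos hc hψc ?_ ?_⟩
  · rw [Ioo_inter_Iio, min_eq_right hc.2.le]
    exact arcEntry_Ioo N.continuous.continuousAt N.continuous_deriv.continuousAt ha hc.1
  · rw [neg_Ioo, Ioo_inter_Iio, min_eq_right (neg_le_neg hc.1.le)]
    simpa using arcEntry_Ioo N.reflect.continuous.continuousAt
      N.reflect.continuous_deriv.continuousAt (by simpa using hb) (neg_lt_neg hc.2)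

lemma IsAdmissibleProfile.exists_hump_Iio (N : IsAdmissibleProfile φ ψ χ) (hb : φ b = 0)
    (hpos : ∀ x ∈ Iio b, 0 < φ x) : ∃ c, IsHump φ ψ (Iio b) c 0 |ψ b| := by
  have hp : 0 < φ (b - 1) := hpos _ (by simp)
  obtain ⟨X, hX, hXφ⟩ := ((eventually_lt_atBot (b - 1)).and
    (N.tendsto_atBot.eventually (gt_mem_nhds hp))).exists
  obtain ⟨q, hq, hqφ⟩ := intermediate_value_Ioo' (by linarith : b - 1 ≤ b)
    N.continuous.continuousOn ⟨hb ▸ hpos X (by simp only [mem_Iio]; linarith), hXφ⟩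
  obtain ⟨c, hc, hψc⟩ := exists_hasDerivAt_eq_zero (hX.trans hq.1) N.continuous.continuousOn
    hqφ.symm fun x _ => N.hasDerivAt x
  have hcb : c < b := hc.2.trans hq.2
  rw [abs_of_neg (N.deriv_neg_of_pos_left hb self_mem_nhdsWithin hpos)]
  refine ⟨c, N.isHump isOpen_Iio ordConnected_Iio hpos hcb hψc ?_ ?_⟩
  · rw [Iio_inter_Iio, min_eq_right hcb.le]
    exact arcEntry_Iio N.tendsto_atBot N.tendsto_deriv_atBot
  · rw [neg_Iio, Ioi_inter_Iio]
    simpa using arcEntry_Ioo N.reflect.continuous.continuousAt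
      N.reflect.continuous_deriv.continuousAt (by simpa using hb) (neg_lt_neg hcb)

lemma IsAdmissibleProfile.exists_hump_Ioi (N : IsAdmissibleProfile φ ψ χ) (ha : φ a = 0)
    (hpos : ∀ x ∈ Ioi a, 0 < φ x) : ∃ c, IsHump φ ψ (Ioi a) c |ψ a| 0 := by
  obtain ⟨c, H⟩ := N.reflect.exists_hump_Iio (b := -a) (by simpa using ha)
    fun x (hx : x < -a) => hpos (-x) (show a < -x from lt_neg.1 hx)
  exact ⟨-c, by simpa using H.reflect⟩

end Hump

lemma Set.Finite.exists_strictMonoOn_image_Icc {α : Type*} [LinearOrder α] [Inhabited α]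
    {s : Set α} (hs : s.Finite) :
    ∃ (k : ℕ) (z : ℕ → α), StrictMonoOn z (Icc 1 k) ∧ z '' Icc 1 k = s := by
  set e := hs.toFinset.orderEmbOfFin rfl
  refine ⟨hs.toFinset.card,
    fun j => if h : j - 1 < hs.toFinset.card then e ⟨j - 1, h⟩ else default, ?_, ?_⟩
  · intro i ⟨hi1, hik⟩ j ⟨hj1, hjk⟩ hij
    simp only [dif_pos (show i - 1 < hs.toFinset.card by omega),
      dif_pos (show j - 1 < hs.toFinset.card by omega)]
    exact e.strictMono (Fin.mk_lt_mk.2 (by omega))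
  · ext x
    constructor
    · rintro ⟨j, ⟨hj1, hjk⟩, rfl⟩
      simp only [dif_pos (show j - 1 < hs.toFinset.card by omega)]
      exact hs.mem_toFinset.1 (Finset.orderEmbOfFin_mem _ _ _)
    · intro hx
      obtain ⟨m, rfl⟩ : x ∈ range e := by
        rw [Finset.range_orderEmbOfFin]
        exact hs.mem_toFinset.2 hx
      exact ⟨m + 1, ⟨by omega, by omega⟩, by simp⟩

section Gaps

/-- The `j`-th sign interval `(z j, z (j + 1))` cut out by the zeros `z 1 < ⋯ < z k`, where
`z 0` stands for `-∞` and `z (k + 1)` for `+∞`. -/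
def gap (z : ℕ → ℝ) (k j : ℕ) : Set ℝ := {x | (0 < j → z j < x) ∧ (j < k → x < z (j + 1))}

/-- The speed `|ψ|` at the zero `z j`, taken to be `0` at the virtual zeros `z 0` and
`z (k + 1)`. -/
def zeroSpeed (z : ℕ → ℝ) (k : ℕ) (ψ : ℝ → ℝ) (j : ℕ) : ℝ :=
  if 0 < j ∧ j ≤ k then |ψ (z j)| else 0

variable {φ ψ χ : ℝ → ℝ} {z : ℕ → ℝ} {k i j : ℕ}

lemma zeroSpeed_zero : zeroSpeed z k ψ 0 = 0 := by simp [zeroSpeed]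

lemma zeroSpeed_of_mem (hj : j ∈ Icc 1 k) : zeroSpeed z k ψ j = |ψ (z j)| :=
  if_pos ⟨hj.1, hj.2⟩

lemma zeroSpeed_of_gt (hj : k < j) : zeroSpeed z k ψ j = 0 := if_neg fun h => by omega

lemma zeroSpeed_nonneg : 0 ≤ zeroSpeed z k ψ j := by
  unfold zeroSpeed
  split_ifs <;> positivity

lemma zeroSpeed_neg : zeroSpeed z k (fun x => -ψ x) j = zeroSpeed z k ψ j := by
  simp [zeroSpeed]

lemma gap_zero (hk : 0 < k) : gap z k 0 = Iio (z 1) := by ext; simp [gap, hk]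

lemma gap_of_pos_of_lt (hj : 0 < j) (hjk : j < k) : gap z k j = Ioo (z j) (z (j + 1)) := by
  ext; simp [gap, hj, hjk]

lemma gap_self (hk : 0 < k) : gap z k k = Ioi (z k) := by ext; simp [gap, hk]

lemma ordConnected_gap : (gap z k j).OrdConnected :=
  ⟨fun _ hx _ hy _ hw => ⟨fun h => (hx.1 h).trans_le hw.1, fun h => hw.2.trans_lt (hy.2 h)⟩⟩

lemma gap_mem_nhdsLT (hz : StrictMonoOn z (Icc 1 k)) (hj : j < k) :
    gap z k j ∈ 𝓝[<] z (j + 1) := by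
  rcases Nat.eq_zero_or_pos j with rfl | hj0
  · rw [gap_zero hj]
    exact self_mem_nhdsWithin
  · rw [gap_of_pos_of_lt hj0 hj]
    exact Ioo_mem_nhdsLT (hz ⟨hj0, hj.le⟩ ⟨by omega, hj⟩ (by omega))

lemma gap_mem_nhdsGT (hz : StrictMonoOn z (Icc 1 k)) (hj0 : 0 < j) (hj : j ≤ k) :
    gap z k j ∈ 𝓝[>] z j := by
  rcases hj.lt_or_eq with hj | rfl
  · rw [gap_of_pos_of_lt hj0 hj]
    exact Ioo_mem_nhdsGT (hz ⟨hj0, hj.le⟩ ⟨by omega, hj⟩ (by omega))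
  · rw [gap_self hj0]
    exact self_mem_nhdsWithin

lemma disjoint_gap (hz : StrictMonoOn z (Icc 1 k)) (hij : i < j) (hj : j ≤ k) :
    Disjoint (gap z k i) (gap z k j) :=
  disjoint_left.2 fun _ hxi hxj => lt_irrefl (z (i + 1)) <|
    (hz.monotoneOn ⟨by omega, by omega⟩ ⟨by omega, hj⟩ hij).trans_lt
      ((hxj.1 (by omega)).trans (hxi.2 (by omega)))

lemma gap_ne_zero (hz : StrictMonoOn z (Icc 1 k)) (hZ : z '' Icc 1 k = {x | φ x = 0})
    (hj : j ≤ k) {x : ℝ} (hx : x ∈ gap z k j) : φ x ≠ 0 := by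
  intro h0
  obtain ⟨i, ⟨hi1, hik⟩, rfl⟩ : x ∈ z '' Icc 1 k := hZ ▸ h0
  have hlt : j < k → i < j + 1 := fun hjk =>
    (hz.lt_iff_lt ⟨hi1, hik⟩ ⟨by omega, hjk⟩).1 (hx.2 hjk)
  rcases Nat.eq_zero_or_pos j with rfl | hj0
  · have := hlt (by omega)
    omega
  · have := (hz.lt_iff_lt ⟨hj0, hj⟩ ⟨hi1, hik⟩).1 (hx.1 hj0)
    have := hlt (by omega)
    omega

lemma IsAdmissibleProfile.exists_hump_gap (N : IsAdmissibleProfile φ ψ χ)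
    (hz : StrictMonoOn z (Icc 1 k)) (hZ : z '' Icc 1 k = {x | φ x = 0}) (hj : j ≤ k)
    (hk : 0 < k) (hpos : ∀ x ∈ gap z k j, 0 < φ x) :
    ∃ c, IsHump φ ψ (gap z k j) c (zeroSpeed z k ψ j) (zeroSpeed z k ψ (j + 1)) := by
  have hzero : ∀ i ∈ Icc 1 k, φ (z i) = 0 := fun i hi => hZ.subset (mem_image_of_mem z hi)
  rcases Nat.eq_zero_or_pos j with rfl | hj0
  · rw [gap_zero hk] at hpos ⊢
    rw [zeroSpeed_zero, zeroSpeed_of_mem ⟨le_rfl, hk⟩]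
    exact N.exists_hump_Iio (hzero 1 ⟨le_rfl, hk⟩) hpos
  rcases hj.lt_or_eq with hjk | rfl
  · rw [gap_of_pos_of_lt hj0 hjk] at hpos ⊢
    rw [zeroSpeed_of_mem ⟨hj0, hj⟩, zeroSpeed_of_mem ⟨by omega, hjk⟩]
    exact N.exists_hump_Ioo (hz ⟨hj0, hj⟩ ⟨by omega, hjk⟩ (by omega)) (hzero j ⟨hj0, hj⟩)
      (hzero (j + 1) ⟨by omega, hjk⟩) hpos
  · rw [gap_self hj0] at hpos ⊢
    rw [zeroSpeed_of_mem ⟨hj0, le_rfl⟩, zeroSpeed_of_gt (by omega)]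
    exact N.exists_hump_Ioi (hzero j ⟨hj0, le_rfl⟩) hpos

/-- Hump `j + 2` is positive as well; equal exit speeds would put two zeros at the same phase
point. -/
lemma IsAdmissibleProfile.zeroSpeed_lt_of_pos (N : IsAdmissibleProfile φ ψ χ)
    (hz : StrictMonoOn z (Icc 1 k)) (hZ : z '' Icc 1 k = {x | φ x = 0}) (hj : j + 2 ≤ k)
    (hpos : ∀ x ∈ gap z k j, 0 < φ x)
    (hlt : zeroSpeed z k ψ j < zeroSpeed z k ψ (j + 2)) :
    zeroSpeed z k ψ (j + 1) < zeroSpeed z k ψ (j + 3) := by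
  have hzero : ∀ i ∈ Icc 1 k, φ (z i) = 0 := fun i hi => hZ.subset (mem_image_of_mem z hi)
  have hneg : ∀ x ∈ gap z k (j + 1), φ x < 0 :=
    N.neg_of_pos_left (hzero (j + 1) ⟨by omega, by omega⟩) (gap_mem_nhdsLT hz (by omega)) hpos
      (gap_mem_nhdsGT hz (by omega) (by omega)) ordConnected_gap.isPreconnected
      fun x hx => gap_ne_zero hz hZ (by omega) hx
  have hpos₂ : ∀ x ∈ gap z k (j + 2), 0 < φ x := by
    simpa using N.neg.neg_of_pos_left (by simp [hzero (j + 2) ⟨by omega, hj⟩])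
      (gap_mem_nhdsLT hz (by omega)) (fun x hx => neg_pos.2 (hneg x hx))
      (gap_mem_nhdsGT hz (by omega) hj) ordConnected_gap.isPreconnected
      fun x hx => by simpa using gap_ne_zero hz hZ hj hx
  obtain ⟨c₁, H₁⟩ := N.exists_hump_gap hz hZ (by omega) (by omega) hpos
  obtain ⟨c₂, H₂⟩ := N.exists_hump_gap hz hZ hj (by omega) hpos₂
  refine (H₁.exit_le N.toIsSimplePhaseCurve H₂ (disjoint_gap hz (by omega) hj) hlt).lt_of_ne ?_
  have hψ₁ : ψ (z (j + 1)) < 0 :=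
    N.deriv_neg_of_pos_left (hzero _ ⟨by omega, by omega⟩) (gap_mem_nhdsLT hz (by omega)) hpos
  rw [zeroSpeed_of_mem ⟨by omega, by omega⟩, abs_of_neg hψ₁]
  rcases (show j + 2 < k ∨ j + 2 = k by omega) with hjk | hjk
  · have hψ₃ : ψ (z (j + 3)) < 0 :=
      N.deriv_neg_of_pos_left (hzero _ ⟨by omega, hjk⟩) (gap_mem_nhdsLT hz hjk) hpos₂
    rw [zeroSpeed_of_mem ⟨by omega, hjk⟩, abs_of_neg hψ₃]
    intro h
    have := N.injective (Prod.ext ((hzero _ ⟨by omega, by omega⟩).trans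
      (hzero _ ⟨by omega, hjk⟩).symm) (neg_inj.1 h))
    exact absurd (hz.injOn ⟨by omega, by omega⟩ ⟨by omega, hjk⟩ this) (by omega)
  · rw [zeroSpeed_of_gt (by omega)]
    exact (neg_pos.2 hψ₁).ne'

lemma IsAdmissibleProfile.zeroSpeed_lt (N : IsAdmissibleProfile φ ψ χ)
    (hz : StrictMonoOn z (Icc 1 k)) (hZ : z '' Icc 1 k = {x | φ x = 0}) (hj : j + 2 ≤ k)
    (hlt : zeroSpeed z k ψ j < zeroSpeed z k ψ (j + 2)) :
    zeroSpeed z k ψ (j + 1) < zeroSpeed z k ψ (j + 3) := by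
  have hne : ∀ x ∈ gap z k j, φ x ≠ 0 := fun x hx => gap_ne_zero hz hZ (by omega) hx
  obtain ⟨x₀, hx₀⟩ := Filter.nonempty_of_mem (gap_mem_nhdsLT hz (j := j) (by omega))
  rcases (hne x₀ hx₀).lt_or_gt with hneg | hpos
  · simpa [zeroSpeed_neg] using N.neg.zeroSpeed_lt_of_pos hz (by simpa using hZ) hj
      (fun x hx => neg_pos.2 (ordConnected_gap.isPreconnected.neg_of_ne_zero
        N.continuous.continuousOn hne hx₀ hneg x hx)) (by simpa [zeroSpeed_neg] using hlt)
  · exact N.zeroSpeed_lt_of_pos hz hZ hj (ordConnected_gap.isPreconnected.pos_of_ne_zero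
      N.continuous.continuousOn hne hx₀ hpos) hlt

theorem IsAdmissibleProfile.zeros_subsingleton (N : IsAdmissibleProfile φ ψ χ)
    (hfin : {x | φ x = 0}.Finite) : {x | φ x = 0}.Subsingleton := by
  obtain ⟨k, z, hz, hZ⟩ := hfin.exists_strictMonoOn_image_Icc
  intro a ha b hb
  by_contra hab
  rw [← hZ] at ha hb
  obtain ⟨i, ⟨hi1, hik⟩, rfl⟩ := ha
  obtain ⟨i', ⟨hi1', hik'⟩, rfl⟩ := hb
  have hk : 2 ≤ k := by
    by_contra! hk
    exact hab (by rw [show i = i' by omega])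
  have hchain : ∀ j, j + 1 ≤ k → zeroSpeed z k ψ j < zeroSpeed z k ψ (j + 2) := by
    intro j
    induction j with
    | zero =>
      intro _
      rw [zeroSpeed_zero, zeroSpeed_of_mem ⟨by omega, hk⟩]
      exact abs_pos.2 (N.deriv_ne_zero _ (hZ.subset (mem_image_of_mem z ⟨by omega, hk⟩)))
    | succ j ih => exact fun hj => N.zeroSpeed_lt hz hZ (by omega) (ih (by omega))
  have hlast := hchain (k - 1) (by omega)
  rw [show k - 1 + 2 = k + 1 by omega, zeroSpeed_of_gt (j := k + 1) (by omega)] at hlast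
  exact hlast.not_ge zeroSpeed_nonneg

end Gaps

section Comparison

variable {f : ℝ → ℝ} {U : ℝ → ℝ → ℝ} {K : NNReal}

lemma pdx_neg (U : ℝ → ℝ → ℝ) : pdx (fun x t => -U x t) = fun x t => -pdx U x t :=
  funext fun _ => funext fun _ => deriv.fun_neg

lemma pdxx_neg (U : ℝ → ℝ → ℝ) : pdxx (fun x t => -U x t) = fun x t => -pdxx U x t := by
  funext x t
  simp only [pdxx, pdx_neg]
  exact deriv.fun_neg

lemma pdt_neg (U : ℝ → ℝ → ℝ) : pdt (fun x t => -U x t) = fun x t => -pdt U x t :=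
  funext fun _ => funext fun _ => deriv.fun_neg

lemma IsEntireSolution.neg (hU : IsEntireSolution f U) :
    IsEntireSolution (fun y => -f (-y)) (fun x t => -U x t) := by
  obtain ⟨⟨M, hM⟩, hc, hdx, hdx2, hdt, hcx, hcxx, hct, hpde⟩ := hU
  refine ⟨⟨M, fun x t => by simpa using hM x t⟩, hc.neg, fun x t => (hdx x t).neg, ?_,
    fun x t => (hdt x t).neg, ?_, ?_, ?_, fun x t => ?_⟩ <;>
    simp only [pdx_neg, pdxx_neg, pdt_neg]
  · exact fun x t => (hdx2 x t).fun_neg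
  · exact hcx.neg
  · exact hcxx.neg
  · exact hct.neg
  · rw [hpde, neg_neg]
    ring

lemma LipschitzWith.neg_comp_neg (hf : LipschitzWith K f) : LipschitzWith K fun y => -f (-y) :=
  LipschitzWith.of_dist_le_mul fun x y => by
    simpa only [dist_neg_neg] using hf.dist_le_mul (-x) (-y)

lemma exists_first_touch {V : ℝ → ℝ → ℝ} (hV : Continuous fun p : ℝ × ℝ => V p.1 p.2)
    {B : Set ℝ} (hB : IsCompact B) {t t' x₁ s₁ : ℝ} (h0 : ∀ x, 0 < V x t)
    (hVB : ∀ x, ∀ s ∈ Icc t t', V x s ≤ 0 → x ∈ B) (hs₁ : s₁ ∈ Icc t t') (hV₁ : V x₁ s₁ ≤ 0) :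
    ∃ x₀ s₀, t < s₀ ∧ V x₀ s₀ = 0 ∧ (∀ x, 0 ≤ V x s₀) ∧ ∀ s ∈ Ico t s₀, 0 < V x₀ s := by
  have hcpt : IsCompact ((B ×ˢ Icc t t') ∩ {p | V p.1 p.2 ≤ 0}) :=
    (hB.prod isCompact_Icc).inter_right (isClosed_le hV continuous_const)
  obtain ⟨⟨x₀, s₀⟩, ⟨⟨-, hs₀⟩, hV₀⟩, hmin⟩ := hcpt.exists_isMinOn
    ⟨(x₁, s₁), ⟨hVB x₁ s₁ hs₁ hV₁, hs₁⟩, hV₁⟩ continuous_snd.continuousOn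
  rw [isMinOn_iff] at hmin
  have hbefore : ∀ x, ∀ s ∈ Ico t s₀, 0 < V x s := by
    intro x s hs
    by_contra! h
    have hsI : s ∈ Icc t t' := ⟨hs.1, hs.2.le.trans hs₀.2⟩
    exact (hmin (x, s) ⟨⟨hVB x s hsI h, hsI⟩, h⟩).not_gt hs.2
  have hts : t < s₀ := hs₀.1.lt_of_ne fun h => (h0 x₀).not_ge (h ▸ hV₀)
  have hslice : ∀ x, 0 ≤ V x s₀ := by
    intro x
    by_contra! h
    have hcont : ContinuousAt (fun s => V x s) s₀ :=
      (hV.comp (Continuous.prodMk_right x)).continuousAt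
    obtain ⟨s, hs, hsI⟩ := (((hcont.eventually (gt_mem_nhds h)).filter_mono
      nhdsWithin_le_nhds).and (Ico_mem_nhdsLT hts)).exists
    exact (hbefore x s hsI).not_gt hs
  exact ⟨x₀, s₀, hts, le_antisymm hV₀ (hslice x₀), hslice, hbefore x₀⟩

lemma second_deriv_nonneg_of_forall_le {W W' : ℝ → ℝ} {x₀ d : ℝ}
    (hW : ∀ x, HasDerivAt W (W' x) x) (hW' : HasDerivAt W' d x₀) (hmin : ∀ x, W x₀ ≤ W x) :
    0 ≤ d := by
  by_contra! hd
  have h0 : W' x₀ = 0 := IsLocalMin.hasDerivAt_eq_zero (Eventually.of_forall hmin) (hW x₀)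
  obtain ⟨x, hx⟩ := (eventually_nhdsGT_lt_of_deriv_neg hW (hW'.eventually_nhdsGT_neg h0 hd)).exists
  exact (hmin x).not_gt hx

lemma HasDerivAt.nonpos_of_forall_le_left {θ : ℝ → ℝ} {t s₀ d : ℝ} (hd : HasDerivAt θ d s₀)
    (hts : t < s₀) (hmin : ∀ s ∈ Ico t s₀, θ s₀ ≤ θ s) : d ≤ 0 := by
  refine le_of_tendsto ((hasDerivAt_iff_tendsto_slope.1 hd).mono_left (nhdsLT_le_nhdsNE s₀)) ?_
  filter_upwards [Ico_mem_nhdsLT hts] with s hs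
  rw [slope_def_field]
  exact div_nonpos_of_nonneg_of_nonpos (sub_nonneg.2 (hmin s hs)) (sub_nonpos.2 hs.2.le)

def barrier (ε α x₁ t x s : ℝ) : ℝ := ε * (1 + (x - x₁) ^ 2) * Real.exp (α * (s - t))

variable {ε α x₁ t : ℝ}

lemma continuous_barrier : Continuous fun p : ℝ × ℝ => barrier ε α x₁ t p.1 p.2 := by
  unfold barrier
  fun_prop

lemma hasDerivAt_barrier_fst (x s : ℝ) :
    HasDerivAt (fun x => barrier ε α x₁ t x s)
      (2 * ε * (x - x₁) * Real.exp (α * (s - t))) x := by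
  refine ((((((hasDerivAt_id x).sub_const x₁).pow 2).const_add 1).const_mul ε).mul_const
    (Real.exp (α * (s - t)))).congr_deriv ?_
  simp only [id, Nat.cast_ofNat]
  ring

lemma hasDerivAt_barrier_snd (x s : ℝ) :
    HasDerivAt (fun s => barrier ε α x₁ t x s) (α * barrier ε α x₁ t x s) s := by
  refine ((((hasDerivAt_id s).sub_const t).const_mul α).exp.const_mul
    (ε * (1 + (x - x₁) ^ 2))).congr_deriv ?_
  simp only [id, barrier]
  ring

/-- At the touching point `U_t + α g ≤ 0 ≤ U_xx + 2 ε e^{α (s - t)}` for the barrier value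
`g ≥ ε e^{α (s - t)}`, while `f(U) ≥ -K g`; with `α = K + 3` this contradicts the equation. -/
lemma IsEntireSolution.false_of_touch (hU : IsEntireSolution f U) (hf : LipschitzWith K f)
    (hf0 : f 0 = 0) (hε : 0 < ε) {x₀ s₀ : ℝ} (hts : t < s₀)
    (h0 : U x₀ s₀ + barrier ε (K + 3) x₁ t x₀ s₀ = 0)
    (hslice : ∀ x, 0 ≤ U x s₀ + barrier ε (K + 3) x₁ t x s₀)
    (hbefore : ∀ s ∈ Ico t s₀, 0 < U x₀ s + barrier ε (K + 3) x₁ t x₀ s) : False := by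
  obtain ⟨-, -, hdx, hdx2, hdt, -, -, -, hpde⟩ := hU
  have hxx : 0 ≤ pdxx U x₀ s₀ + 2 * ε * Real.exp ((K + 3) * (s₀ - t)) := by
    refine second_deriv_nonneg_of_forall_le
      (fun x => (hdx x s₀).hasDerivAt.fun_add (hasDerivAt_barrier_fst x s₀))
      ((hdx2 x₀ s₀).hasDerivAt.fun_add ?_) fun x => by linarith [hslice x]
    simpa using (((hasDerivAt_id x₀).sub_const x₁).const_mul (2 * ε)).mul_const
      (Real.exp ((K + 3) * (s₀ - t)))
  have hss : pdt U x₀ s₀ + (K + 3) * barrier ε (K + 3) x₁ t x₀ s₀ ≤ 0 :=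
    ((hdt x₀ s₀).hasDerivAt.fun_add (hasDerivAt_barrier_snd x₀ s₀)).nonpos_of_forall_le_left
      hts fun s hs => by linarith [hbefore s hs]
  have hεE : 0 < ε * Real.exp ((K + 3) * (s₀ - t)) := by positivity
  have hgE : ε * Real.exp ((K + 3) * (s₀ - t)) ≤ barrier ε (K + 3) x₁ t x₀ s₀ := by
    unfold barrier
    nlinarith [mul_nonneg hεE.le (sq_nonneg (x₀ - x₁))]
  have hU₀ : U x₀ s₀ = -barrier ε (K + 3) x₁ t x₀ s₀ := by linarith
  have hfU : -(K * barrier ε (K + 3) x₁ t x₀ s₀) ≤ f (U x₀ s₀) := by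
    have hlip := hf.dist_le_mul (U x₀ s₀) 0
    rw [Real.dist_eq, Real.dist_eq, hf0, sub_zero, sub_zero, hU₀, abs_neg,
      abs_of_pos (hεE.trans_le hgE)] at hlip
    rw [hU₀]
    linarith [neg_abs_le (f (-barrier ε (K + 3) x₁ t x₀ s₀))]
  linarith [hpde x₀ s₀]

theorem IsEntireSolution.nonneg_of_nonneg (hU : IsEntireSolution f U) (hf : LipschitzWith K f)
    (hf0 : f 0 = 0) {t' : ℝ} (htt' : t ≤ t') (h0 : ∀ x, 0 ≤ U x t) (x₁ : ℝ) : 0 ≤ U x₁ t' := by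
  obtain ⟨M, hM⟩ := hU.1
  by_contra! hneg
  set E := Real.exp ((K + 3) * (t' - t))
  set ε := -U x₁ t' / (2 * E)
  have hε : 0 < ε := div_pos (by linarith) (by positivity)
  have hV₁ : U x₁ t' + barrier ε (K + 3) x₁ t x₁ t' ≤ 0 := by
    have hbar : barrier ε (K + 3) x₁ t x₁ t' = ε * E := by
      show ε * (1 + (x₁ - x₁) ^ 2) * E = ε * E
      ring
    have hεE : ε * E = -U x₁ t' / 2 := by
      show -U x₁ t' / (2 * E) * E = -U x₁ t' / 2
      rw [div_mul_eq_mul_div, mul_div_mul_right _ _ (Real.exp_pos _).ne']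
    linarith
  have hVt : ∀ x, 0 < U x t + barrier ε (K + 3) x₁ t x t := fun x =>
    add_pos_of_nonneg_of_pos (h0 x) (by unfold barrier; positivity)
  have hVB : ∀ x, ∀ s ∈ Icc t t', U x s + barrier ε (K + 3) x₁ t x s ≤ 0 →
      x ∈ Icc (x₁ - √(M / ε)) (x₁ + √(M / ε)) := by
    intro x s hs hV
    have hbar : ε * (1 + (x - x₁) ^ 2) ≤ barrier ε (K + 3) x₁ t x s :=
      le_mul_of_one_le_right (by positivity) (Real.one_le_exp (by nlinarith [hs.1]))
    have hsq : (x - x₁) ^ 2 ≤ M / ε := by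
      rw [le_div_iff₀ hε]
      nlinarith [(abs_le.1 (hM x s)).1]
    have := abs_le.1 (Real.abs_le_sqrt hsq)
    exact ⟨by linarith, by linarith⟩
  obtain ⟨x₀, s₀, hts, hV₀, hslice, hbefore⟩ := exists_first_touch
    ((hU.2.1.comp continuous_id).add continuous_barrier) isCompact_Icc hVt hVB ⟨htt', le_rfl⟩ hV₁
  exact hU.false_of_touch hf hf0 hε hts hV₀ hslice hbefore

theorem IsEntireSolution.nonpos_of_nonpos (hU : IsEntireSolution f U) (hf : LipschitzWith K f)
    (hf0 : f 0 = 0) {t' : ℝ} (htt' : t ≤ t') (h0 : ∀ x, U x t ≤ 0) (x₁ : ℝ) : U x₁ t' ≤ 0 := by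
  simpa using hU.neg.nonneg_of_nonneg hf.neg_comp_neg (by simp [hf0]) htt'
    (fun x => neg_nonneg.2 (h0 x)) x₁

end Comparison

lemma IsEntireSolution.exists_zero_of_sign_change {f : ℝ → ℝ} {U : ℝ → ℝ → ℝ} {K : NNReal}
    (hU : IsEntireSolution f U) (hf : LipschitzWith K f) (hf0 : f 0 = 0) {t t₀ : ℝ}
    (ht : t ≤ t₀) (hneg : ∃ x, U x t₀ < 0) (hpos : ∃ x, 0 < U x t₀) : ∃ x, U x t = 0 := by
  by_contra! hne
  have hcont : ContinuousOn (fun x => U x t) univ :=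
    (hU.2.1.comp (Continuous.prodMk_left t)).continuousOn
  rcases (hne 0).lt_or_gt with h | h
  · obtain ⟨x, hx⟩ := hpos
    exact (hU.nonpos_of_nonpos hf hf0 ht (fun y => (isPreconnected_univ.neg_of_ne_zero hcont
      (fun y _ => hne y) (mem_univ 0) h y (mem_univ y)).le) x).not_gt hx
  · obtain ⟨x, hx⟩ := hneg
    exact (hU.nonneg_of_nonneg hf hf0 ht (fun y => (isPreconnected_univ.pos_of_ne_zero hcont
      (fun y _ => hne y) (mem_univ 0) h y (mem_univ y)).le) x).not_gt hx

lemma IsEntireSolution.isAdmissibleProfile {f : ℝ → ℝ} {U : ℝ → ℝ → ℝ}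
    (hU : IsEntireSolution f U) (hside : SideConds U) {t : ℝ}
    (hlim : Tendsto (fun x => U x t) atBot (𝓝 0) ∧ Tendsto (fun x => U x t) atTop (𝓝 0) ∧
      Tendsto (fun x => pdx U x t) atBot (𝓝 0) ∧ Tendsto (fun x => pdx U x t) atTop (𝓝 0)) :
    IsAdmissibleProfile (fun x => U x t) (fun x => pdx U x t) (fun x => pdxx U x t) where
  hasDerivAt x := (hU.2.2.1 x t).hasDerivAt
  continuous_deriv := continuous_iff_continuousAt.2 fun x => (hU.2.2.2.1 x t).continuousAt
  injective := hside.2.2.2.1 t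
  hasDerivAt_deriv x := (hU.2.2.2.1 x t).hasDerivAt
  deriv_ne_zero x := (hside.2.1 x t).1
  deriv2_ne_zero x := (hside.2.1 x t).2
  tendsto_atBot := hlim.1
  tendsto_atTop := hlim.2.1
  tendsto_deriv_atBot := hlim.2.2.1
  tendsto_deriv_atTop := hlim.2.2.2
  nonpos_of_isLocalMin x := (hside.2.2.2.2 t x).1
  nonneg_of_isLocalMax x := (hside.2.2.2.2 t x).2

theorem statement15_general (f : ℝ → ℝ) (hMF : CondMF f)
    (hf0 : f 0 = 0)
    (U : ℝ → ℝ → ℝ) (hU : IsEntireSolution f U)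
    (hside : SideConds U)
    (hlim : ∀ t : ℝ,
      Tendsto (fun x => U x t) atBot (nhds 0) ∧ Tendsto (fun x => U x t) atTop (nhds 0) ∧
      Tendsto (fun x => pdx U x t) atBot (nhds 0) ∧
      Tendsto (fun x => pdx U x t) atTop (nhds 0))
    (t₀ : ℝ) (hz : ∃ x : ℝ, U x t₀ = 0) :
    ∀ t : ℝ, t < t₀ → ∃! x : ℝ, U x t = 0 := by
  obtain ⟨⟨K, hK⟩, -⟩ := hMF
  obtain ⟨m, hm⟩ := hside.1
  have hprofile := fun t => hU.isAdmissibleProfile hside (hlim t)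
  intro t ht
  obtain ⟨x₀, hx₀⟩ := hz
  obtain ⟨hneg, hpos⟩ := ((hprofile t₀).hasDerivAt x₀).exists_neg_and_exists_pos hx₀
    ((hprofile t₀).deriv_ne_zero x₀ hx₀)
  obtain ⟨x, hx⟩ := hU.exists_zero_of_sign_change hK hf0 ht.le hneg hpos
  exact ⟨x, hx, fun y hy => (hprofile t).zeros_subsingleton (hm t).1 hy hx⟩

/-- in case (T2) (`(U, U_x) → (0,0)` at spatial infinity), if `U(·,t₀)` has a
zero then `U(·,t)` has exactly one zero for every `t < t₀`. -/
theorem statement15 (f : ℝ → ℝ) (hf : LocallyLipschitz f) (hND : CondND f) (hMF : CondMF f)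
    (hf0 : f 0 = 0) (hf0' : 0 < deriv f 0)
    (U : ℝ → ℝ → ℝ) (hU : IsEntireSolution f U)
    (hUx : ¬ ∀ x t : ℝ, pdx U x t = 0)
    (Pi0 : Set (ℝ × ℝ)) (hPi0 : ∃ z ∈ P0 f, Pi0 = connectedComponentIn (P0 f) z)
    (hPi00 : ((0 : ℝ), (0 : ℝ)) ∈ closure Pi0)
    (hc0 : ∀ t x : ℝ, (U x t, pdx U x t) ∈ Pi0)
    (hside : SideConds U)
    (hlim : ∀ t : ℝ,
      Tendsto (fun x => U x t) atBot (nhds 0) ∧ Tendsto (fun x => U x t) atTop (nhds 0) ∧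
      Tendsto (fun x => pdx U x t) atBot (nhds 0) ∧
      Tendsto (fun x => pdx U x t) atTop (nhds 0))
    (t₀ : ℝ) (hz : ∃ x : ℝ, U x t₀ = 0) :
    ∀ t : ℝ, t < t₀ → ∃! x : ℝ, U x t = 0 :=
  statement15_general f hMF hf0 U hU hside hlim t₀ hz
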